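/- Let (Ω, 𝓕, P) be a probability space with a filtration (𝓕_t)_{t∈ℕ}, and let θ* ∈ ℝ^n. Let 0 < μ ≤ L, 0 < λ_min ≤ λ_max, σ ≥ 0, and 0 < η < 2 λ_min μ / (L² λ_max²). Let (θ_t)_{t∈ℕ} be a sequence of ℝ^n-valued random vectors adapted to (𝓕_t) with θ_0 almost surely constant and each ‖θ_t − θ*‖² integrable, and let (D_t)_{t∈ℕ} be ℝ^n-valued random vectors with each ‖D_t‖² integrable such that θ_{t+1} = θ_t − η D_t almost surely. Assume for every t, almost surely: (i) ⟨θ_t − θ*, E[D_t | 𝓕_t]⟩ ≥ λ_min μ ‖θ_t − θ*‖², and (ii) E[‖D_t‖² | 𝓕_t] ≤ λ_max² (L² ‖θ_t − θ*‖² + σ²). Then for every t ∈ ℕ, E[‖θ_t − θ*‖²] ≤ (1 − 2η λ_min μ + η² L² λ_max²)^t · ‖θ_0 − θ*‖² + η σ² λ_max² / (2 λ_min μ − η L² λ_max²). -/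

import Mathlib

open MeasureTheory
open scoped RealInnerProductSpace

/-!
Write `X_t = θ_t − θ*`, so that `‖X_{t+1}‖² = ‖X_t‖² − 2η⟪X_t, D_t⟫ + η²‖D_t‖²`. Since `X_t` is
`𝓕_t`-measurable it can be pulled out of `E[⟪X_t, D_t⟫ | 𝓕_t]`, so the drift bound controls the
cross term and the second-moment bound the last one. Taking expectations gives the affine
recursion `e_{t+1} ≤ ρ e_t + η²λ_max²σ²` for `e_t = E‖X_t‖²`, with `ρ = 1 − 2ηλ_min μ + η²L²λ_max²`;
the additive constant of the theorem is the fixed point of `e ↦ ρ e + η²λ_max²σ²`, so unrolling the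
recursion gives the bound.
-/

theorem le_pow_mul_add_of_le_mul_add {R : Type*} [Semiring R] [PartialOrder R] [IsOrderedRing R]
    {e : ℕ → R} {ρ c K : R} (hρ : 0 ≤ ρ) (hK : 0 ≤ K) (hfix : ρ * K + c ≤ K)
    (hstep : ∀ t, e (t + 1) ≤ ρ * e t + c) (t : ℕ) :
    e t ≤ ρ ^ t * e 0 + K := by
  induction t with
  | zero => simpa using le_add_of_nonneg_right hK
  | succ t ih =>
    calc e (t + 1) ≤ ρ * e t + c := hstep t
      _ ≤ ρ * (ρ ^ t * e 0 + K) + c := by gcongr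
      _ = ρ ^ (t + 1) * e 0 + (ρ * K + c) := by rw [mul_add, pow_succ', mul_assoc, add_assoc]
      _ ≤ ρ ^ (t + 1) * e 0 + K := by gcongr

section InnerProductSpace

variable {Ω E : Type*} {m m0 : MeasurableSpace Ω} {μ : Measure Ω}
  [NormedAddCommGroup E] [InnerProductSpace ℝ E]

theorem norm_sub_smul_sq (x d : E) (η : ℝ) :
    ‖x - η • d‖ ^ 2 = ‖x‖ ^ 2 - 2 * η * ⟪x, d⟫ + η ^ 2 * ‖d‖ ^ 2 := by
  rw [norm_sub_sq_real, real_inner_smul_right, norm_smul, mul_pow, Real.norm_eq_abs, sq_abs]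
  ring

theorem integrable_inner_of_integrable_sq_norm {X Y : Ω → E}
    (hX : AEStronglyMeasurable X μ) (hY : AEStronglyMeasurable Y μ)
    (hX2 : Integrable (fun ω => ‖X ω‖ ^ 2) μ) (hY2 : Integrable (fun ω => ‖Y ω‖ ^ 2) μ) :
    Integrable (fun ω => ⟪X ω, Y ω⟫) μ := by
  refine ((hX2.add hY2).div_const 2).mono' (hX.inner hY) (ae_of_all _ fun ω => ?_)
  simp only [Real.norm_eq_abs, Pi.add_apply]
  have := abs_real_inner_le_norm (X ω) (Y ω)
  nlinarith [sq_nonneg (‖X ω‖ - ‖Y ω‖)]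

theorem integral_le_integral_of_condExp_le (hm : m ≤ m0) [SigmaFinite (μ.trim hm)]
    {f g : Ω → ℝ} (hg : Integrable g μ) (hfg : μ[f | m] ≤ᵐ[μ] g) :
    ∫ ω, f ω ∂μ ≤ ∫ ω, g ω ∂μ :=
  integral_condExp (μ := μ) hm (f := f) ▸ integral_mono_ae integrable_condExp hg hfg

theorem integral_le_integral_of_le_condExp (hm : m ≤ m0) [SigmaFinite (μ.trim hm)]
    {f g : Ω → ℝ} (hg : Integrable g μ) (hgf : g ≤ᵐ[μ] μ[f | m]) :
    ∫ ω, g ω ∂μ ≤ ∫ ω, f ω ∂μ :=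
  integral_condExp (μ := μ) hm (f := f) ▸ integral_mono_ae hg integrable_condExp hgf

theorem condExp_inner_of_stronglyMeasurable_left [CompleteSpace E] {X D : Ω → E}
    (hX : StronglyMeasurable[m] X) (hXD : Integrable (fun ω => ⟪X ω, D ω⟫) μ)
    (hD : Integrable D μ) :
    μ[fun ω => ⟪X ω, D ω⟫ | m] =ᵐ[μ] fun ω => ⟪X ω, (μ[D | m]) ω⟫ :=
  condExp_bilin_of_stronglyMeasurable_left (innerSL ℝ) hX hXD hD

theorem integral_norm_sub_smul_sq_le [CompleteSpace E] [IsProbabilityMeasure μ] (hm : m ≤ m0)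
    {X D : Ω → E} (hX : StronglyMeasurable[m] X) (hX2 : Integrable (fun ω => ‖X ω‖ ^ 2) μ)
    (hD : Integrable D μ) (hD2 : Integrable (fun ω => ‖D ω‖ ^ 2) μ) {η a b c : ℝ} (hη : 0 ≤ η)
    (hdrift : ∀ᵐ ω ∂μ, a * ‖X ω‖ ^ 2 ≤ ⟪X ω, (μ[D | m]) ω⟫)
    (hsecond : ∀ᵐ ω ∂μ, (μ[fun ω => ‖D ω‖ ^ 2 | m]) ω ≤ b * ‖X ω‖ ^ 2 + c) :
    ∫ ω, ‖X ω - η • D ω‖ ^ 2 ∂μ ≤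
      (1 - 2 * η * a + η ^ 2 * b) * ∫ ω, ‖X ω‖ ^ 2 ∂μ + η ^ 2 * c := by
  have hXD : Integrable (fun ω => ⟪X ω, D ω⟫) μ :=
    integrable_inner_of_integrable_sq_norm (hX.mono hm).aestronglyMeasurable
      hD.aestronglyMeasurable hX2 hD2
  have hfirst : a * ∫ ω, ‖X ω‖ ^ 2 ∂μ ≤ ∫ ω, ⟪X ω, D ω⟫ ∂μ := by
    rw [← integral_const_mul]
    refine integral_le_integral_of_le_condExp hm (hX2.const_mul a) ?_
    filter_upwards [hdrift, condExp_inner_of_stronglyMeasurable_left hX hXD hD] with ω h h'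
    exact h.trans_eq h'.symm
  have hsq : ∫ ω, ‖D ω‖ ^ 2 ∂μ ≤ b * ∫ ω, ‖X ω‖ ^ 2 ∂μ + c := by
    have hbound : Integrable (fun ω => b * ‖X ω‖ ^ 2 + c) μ :=
      (hX2.const_mul b).add (integrable_const c)
    have := integral_le_integral_of_condExp_le hm hbound hsecond
    rwa [integral_add (hX2.const_mul b) (integrable_const c), integral_const_mul,
      integral_const, probReal_univ, one_smul] at this
  simp_rw [norm_sub_smul_sq]
  have hdiff : Integrable (fun ω => ‖X ω‖ ^ 2 - 2 * η * ⟪X ω, D ω⟫) μ :=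
    hX2.sub (hXD.const_mul _)
  rw [integral_add hdiff (hD2.const_mul _), integral_sub hX2 (hXD.const_mul _),
    integral_const_mul, integral_const_mul]
  nlinarith [mul_le_mul_of_nonneg_left hfirst hη, mul_le_mul_of_nonneg_left hsq (sq_nonneg η)]

end InnerProductSpace

theorem fim_sgd_convergence_general
    {Ω : Type*} {m0 : MeasurableSpace Ω} (P : Measure Ω) [IsProbabilityMeasure P]
    (𝓕 : Filtration ℕ m0)
    (n : ℕ)
    (θ D : ℕ → Ω → EuclideanSpace ℝ (Fin n))
    (θStar θinit : EuclideanSpace ℝ (Fin n))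
    (μ L lmin lmax σ η : ℝ)
    (hμ : 0 < μ) (hμL : μ ≤ L)
    (hlmin : 0 < lmin) (hlminmax : lmin ≤ lmax)
    (hη0 : 0 < η) (hη : η < 2 * lmin * μ / (L ^ 2 * lmax ^ 2))
    (hadapted : Adapted 𝓕 θ)
    (hθ0 : ∀ᵐ ω ∂P, θ 0 ω = θinit)
    (hθ_sq_int : ∀ t, Integrable (fun ω => ‖θ t ω - θStar‖ ^ 2) P)
    (hD_int : ∀ t, Integrable (D t) P)
    (hD_sq_int : ∀ t, Integrable (fun ω => ‖D t ω‖ ^ 2) P)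
    (hupdate : ∀ t, ∀ᵐ ω ∂P, θ (t + 1) ω = θ t ω - η • D t ω)
    (hdrift : ∀ t, ∀ᵐ ω ∂P,
      lmin * μ * ‖θ t ω - θStar‖ ^ 2 ≤ ⟪θ t ω - θStar, (P[D t | 𝓕 t]) ω⟫)
    (hsecond : ∀ t, ∀ᵐ ω ∂P,
      (P[fun ω' => ‖D t ω'‖ ^ 2 | 𝓕 t]) ω ≤
        lmax ^ 2 * (L ^ 2 * ‖θ t ω - θStar‖ ^ 2 + σ ^ 2)) :
    ∀ t, ∫ ω, ‖θ t ω - θStar‖ ^ 2 ∂P ≤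
      (1 - 2 * η * lmin * μ + η ^ 2 * L ^ 2 * lmax ^ 2) ^ t *
        ‖θinit - θStar‖ ^ 2 +
        η * σ ^ 2 * lmax ^ 2 / (2 * lmin * μ - η * L ^ 2 * lmax ^ 2) := by
  have hL : 0 < L := hμ.trans_le hμL
  have hlmax : 0 < lmax := hlmin.trans_le hlminmax
  have hgap : 0 < 2 * lmin * μ - η * L ^ 2 * lmax ^ 2 := by
    nlinarith [(lt_div_iff₀ (by positivity)).mp hη]
  have hcontraction : 0 ≤ 1 - 2 * η * lmin * μ + η ^ 2 * L ^ 2 * lmax ^ 2 := by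
    have : lmin * μ ≤ lmax * L := mul_le_mul hlminmax hμL hμ.le hlmax.le
    nlinarith [sq_nonneg (1 - η * lmax * L)]
  have hstep : ∀ t, ∫ ω, ‖θ (t + 1) ω - θStar‖ ^ 2 ∂P ≤
      (1 - 2 * η * lmin * μ + η ^ 2 * L ^ 2 * lmax ^ 2) * ∫ ω, ‖θ t ω - θStar‖ ^ 2 ∂P
        + η ^ 2 * (lmax ^ 2 * σ ^ 2) := by
    intro t
    have hX : StronglyMeasurable[𝓕 t] fun ω => θ t ω - θStar :=
      (hadapted t).stronglyMeasurable.sub stronglyMeasurable_const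
    have hsecond' : ∀ᵐ ω ∂P, (P[fun ω' => ‖D t ω'‖ ^ 2 | 𝓕 t]) ω ≤
        L ^ 2 * lmax ^ 2 * ‖θ t ω - θStar‖ ^ 2 + lmax ^ 2 * σ ^ 2 :=
      (hsecond t).mono fun ω h => h.trans_eq (by ring)
    calc ∫ ω, ‖θ (t + 1) ω - θStar‖ ^ 2 ∂P
        = ∫ ω, ‖(θ t ω - θStar) - η • D t ω‖ ^ 2 ∂P :=
          integral_congr_ae <| (hupdate t).mono fun ω h => by dsimp only; rw [h, sub_right_comm]
      _ ≤ _ := integral_norm_sub_smul_sq_le (𝓕.le t) hX (hθ_sq_int t) (hD_int t)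
          (hD_sq_int t) hη0.le (hdrift t) hsecond'
      _ = _ := by ring
  have hinit : ∫ ω, ‖θ 0 ω - θStar‖ ^ 2 ∂P = ‖θinit - θStar‖ ^ 2 := by
    rw [integral_congr_ae (hθ0.mono fun ω h => by rw [h]), integral_const, probReal_univ,
      one_smul]
  intro t
  rw [← hinit]
  refine le_pow_mul_add_of_le_mul_add (e := fun t => ∫ ω, ‖θ t ω - θStar‖ ^ 2 ∂P)
    hcontraction (by positivity) (le_of_eq ?_) hstep t
  field_simp
  ring

/-- Convergence of FIM-SGD (Theorem 2 of the paper). For adapted iterates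
`θ_{t+1} = θ_t − η D_t` (with `D_t` the preconditioned stochastic gradient),
where almost surely `⟨θ_t − θ*, E[D_t | 𝓕_t]⟩ ≥ λmin μ ‖θ_t − θ*‖²` and
`E[‖D_t‖² | 𝓕_t] ≤ λmax² (L² ‖θ_t − θ*‖² + σ²)`, and the learning rate
satisfies `0 < η < 2 λmin μ / (L² λmax²)`, the expected squared distance to
the optimum satisfies
`E[‖θ_t − θ*‖²] ≤ (1 − 2η λmin μ + η² L² λmax²)^t ‖θ_0 − θ*‖²
  + η σ² λmax² / (2 λmin μ − η L² λmax²)`. -/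
theorem fim_sgd_convergence
    {Ω : Type*} {m0 : MeasurableSpace Ω} (P : Measure Ω) [IsProbabilityMeasure P]
    (𝓕 : Filtration ℕ m0)
    (n : ℕ)
    (θ D : ℕ → Ω → EuclideanSpace ℝ (Fin n))
    (θStar θinit : EuclideanSpace ℝ (Fin n))
    (μ L lmin lmax σ η : ℝ)
    (hμ : 0 < μ) (hμL : μ ≤ L)
    (hlmin : 0 < lmin) (hlminmax : lmin ≤ lmax)
    (hσ : 0 ≤ σ)
    (hη0 : 0 < η) (hη : η < 2 * lmin * μ / (L ^ 2 * lmax ^ 2))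
    (hadapted : Adapted 𝓕 θ)
    (hθ0 : ∀ᵐ ω ∂P, θ 0 ω = θinit)
    (hθ_sq_int : ∀ t, Integrable (fun ω => ‖θ t ω - θStar‖ ^ 2) P)
    (hD_int : ∀ t, Integrable (D t) P)
    (hD_sq_int : ∀ t, Integrable (fun ω => ‖D t ω‖ ^ 2) P)
    (hupdate : ∀ t, ∀ᵐ ω ∂P, θ (t + 1) ω = θ t ω - η • D t ω)
    (hdrift : ∀ t, ∀ᵐ ω ∂P,
      lmin * μ * ‖θ t ω - θStar‖ ^ 2 ≤ ⟪θ t ω - θStar, (P[D t | 𝓕 t]) ω⟫)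
    (hsecond : ∀ t, ∀ᵐ ω ∂P,
      (P[fun ω' => ‖D t ω'‖ ^ 2 | 𝓕 t]) ω ≤
        lmax ^ 2 * (L ^ 2 * ‖θ t ω - θStar‖ ^ 2 + σ ^ 2)) :
    ∀ t, ∫ ω, ‖θ t ω - θStar‖ ^ 2 ∂P ≤
      (1 - 2 * η * lmin * μ + η ^ 2 * L ^ 2 * lmax ^ 2) ^ t *
        ‖θinit - θStar‖ ^ 2 +
        η * σ ^ 2 * lmax ^ 2 / (2 * lmin * μ - η * L ^ 2 * lmax ^ 2) :=
  fim_sgd_convergence_general P 𝓕 n θ D θStar θinit μ L lmin lmax σ η hμ hμL hlmin hlminmax hη0 hη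
    hadapted hθ0 hθ_sq_int hD_int hD_sq_int hupdate hdrift hsecond
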